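/- arXiv:2104.14395 — 4 statements merged into one kernel-verified Lean document; each statement's English description precedes it below -/
import Mathlib

section
/- Two graphs G₁ and G₂ are isomorphic if and only if their subdivisions s(G₁) and s(G₂) are isomorphic. -/
/-
`G` is recovered from `s(G)` as the graph on the original vertices in which two vertices are
adjacent when they have a common neighbour, so an isomorphism `s(G₁) ≃g s(G₂)` that maps original
vertices to original vertices restricts to `G₁ ≃g G₂`. A general isomorphism `φ` may exchange the
two kinds of vertices, but only on a union of components of `s(G₁)` all of whose vertices have
degree two. There, each vertex `v` of `G₁` that `φ` sends to a subdivision vertex can be replaced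
by the subdivision vertex of an incident edge, bijectively: a 2-regular bipartite graph, even an
infinite one, has a perfect matching (Hall's theorem on both sides, then Schröder–Bernstein).
The new copy of `G₁` inside `s(G₁)` is still a common-neighbour graph, and it is exactly the set
of vertices that `φ` sends to original vertices of `G₂`.
-/

open SimpleGraph

/-- The subdivision `s(G)` of `G`: each edge `uv` is replaced by a path `u — w_e — v`
through a new vertex `w_e`. -/
def subdiv {V : Type*} (G : SimpleGraph V) : SimpleGraph (V ⊕ G.edgeSet) :=
  SimpleGraph.fromRel fun a b =>
    match a, b with
    | Sum.inl v, Sum.inr e => v ∈ (e : Sym2 V)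
    | _, _ => False

open Function Sum

theorem exists_injective_of_ncard_eq {α β : Type*} (r : α → β → Prop) {k : ℕ} (hk : 0 < k)
    (hα : ∀ a, {b | r a b}.ncard = k) (hβ : ∀ b, {a | r a b}.ncard = k) :
    ∃ f : α → β, Injective f ∧ ∀ a, r a (f a) := by
  classical
  have hfinα (a : α) : {b | r a b}.Finite := Set.finite_of_ncard_pos (hα a ▸ hk)
  have hfinβ (b : β) : {a | r a b}.Finite := Set.finite_of_ncard_pos (hβ b ▸ hk)
  let t (a : α) : Finset β := (hfinα a).toFinset
  suffices hall : ∀ s : Finset α, s.card ≤ (s.biUnion t).card by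
    obtain ⟨f, hf, hfr⟩ := (Finset.all_card_le_biUnion_card_iff_exists_injective t).mp hall
    exact ⟨f, hf, fun a => by simpa [t] using hfr a⟩
  intro s
  -- each `a ∈ s` has `k` partners in `s.biUnion t`, each of which has at most `k` partners in `s`
  have hcount : s.card * k ≤ (s.biUnion t).card * k := by
    refine Finset.card_mul_le_card_mul r (fun a ha => ?_) (fun b _ => ?_)
    · have : (s.biUnion t).bipartiteAbove r a = t a := by
        ext b
        simp only [Finset.mem_bipartiteAbove, Finset.mem_biUnion, t, Set.Finite.mem_toFinset,
          Set.mem_ofPred_eq]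
        exact ⟨And.right, fun hb => ⟨⟨a, ha, hb⟩, hb⟩⟩
      rw [this, ← hα a, Set.ncard_eq_toFinset_card _ (hfinα a)]
    · rw [← hβ b, Set.ncard_eq_toFinset_card _ (hfinβ b)]
      exact Finset.card_le_card fun a ha => by simpa using ((Finset.mem_bipartiteBelow r).mp ha).2
  exact Nat.le_of_mul_le_mul_right hcount hk

theorem exists_bijective_of_ncard_eq {α β : Type*} (r : α → β → Prop) {k : ℕ} (hk : 0 < k)
    (hα : ∀ a, {b | r a b}.ncard = k) (hβ : ∀ b, {a | r a b}.ncard = k) :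
    ∃ f : α → β, Bijective f ∧ ∀ a, r a (f a) := by
  obtain ⟨f, hf, hfr⟩ := exists_injective_of_ncard_eq r hk hα hβ
  obtain ⟨g, hg, hgr⟩ := exists_injective_of_ncard_eq (flip r) hk hβ hα
  exact Embedding.schroeder_bernstein_of_rel hf hg r hfr hgr

lemma Set.eq_or_eq_of_ncard_eq_two {α : Type*} {s : Set α} {a b c : α} (hs : s.ncard = 2)
    (ha : a ∈ s) (hb : b ∈ s) (hc : c ∈ s) (hab : a ≠ b) : c = a ∨ c = b := by
  obtain ⟨x, y, -, rfl⟩ := Set.ncard_eq_two.mp hs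
  simp only [Set.mem_insert_iff, Set.mem_singleton_iff] at ha hb hc
  grind

namespace SimpleGraph

variable {W W' : Type*} {K : SimpleGraph W} {K' : SimpleGraph W'}

theorem exists_bijective_adj_of_ncard_neighborSet_eq {p₁ p₂ : Set W} {k : ℕ} (hk : 0 < k)
    (h₁ : ∀ x ∈ p₁, K.neighborSet x ⊆ p₂) (h₂ : ∀ y ∈ p₂, K.neighborSet y ⊆ p₁)
    (hdeg : ∀ x ∈ p₁ ∪ p₂, (K.neighborSet x).ncard = k) :
    ∃ f : p₁ → p₂, Bijective f ∧ ∀ a : p₁, K.Adj a (f a) := by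
  have hnbr (x : W) (p : Set W) (hx : K.neighborSet x ⊆ p) :
      {b : p | K.Adj x b}.ncard = (K.neighborSet x).ncard :=
    Set.ncard_preimage_of_injective_subset_range (s := K.neighborSet x) Subtype.val_injective
      (by rwa [Subtype.range_coe])
  refine exists_bijective_of_ncard_eq (fun (a : p₁) (b : p₂) => K.Adj a b) hk (fun a => ?_)
    (fun b => ?_)
  · rw [hnbr a p₂ (h₁ a a.2), hdeg a (.inl a.2)]
  · rw [← hdeg b (.inr b.2), ← hnbr b p₁ (h₂ b b.2)]
    simp only [adj_comm]

lemma Iso.ncard_neighborSet (φ : K ≃g K') (x : W) :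
    (K'.neighborSet (φ x)).ncard = (K.neighborSet x).ncard := by
  rw [← Nat.card_coe_set_eq, ← Nat.card_coe_set_eq, Nat.card_congr (φ.mapNeighborSet x)]

def commonNeighborGraph (K : SimpleGraph W) : SimpleGraph W where
  Adj a b := a ≠ b ∧ ∃ z, K.Adj a z ∧ K.Adj b z
  symm := ⟨fun _ _ ⟨hab, z, ha, hb⟩ => ⟨hab.symm, z, hb, ha⟩⟩
  loopless := ⟨fun _ h => h.1 rfl⟩

@[simp] lemma commonNeighborGraph_adj {a b : W} :
    K.commonNeighborGraph.Adj a b ↔ a ≠ b ∧ ∃ z, K.Adj a z ∧ K.Adj b z :=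
  Iff.rfl

def Iso.commonNeighborGraph (φ : K ≃g K') : K.commonNeighborGraph ≃g K'.commonNeighborGraph where
  toEquiv := φ.toEquiv
  map_rel_iff' {a b} := by
    simp only [commonNeighborGraph_adj, RelIso.coe_fn_toEquiv, φ.injective.ne_iff]
    refine and_congr_right fun _ => ⟨fun ⟨z, ha, hb⟩ => ?_,
      fun ⟨z, ha, hb⟩ => ⟨φ z, φ.map_adj_iff.mpr ha, φ.map_adj_iff.mpr hb⟩⟩
    obtain ⟨z, rfl⟩ := φ.surjective z
    exact ⟨z, φ.map_adj_iff.mp ha, φ.map_adj_iff.mp hb⟩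

end SimpleGraph

section Subdivision

variable {V : Type*} {G : SimpleGraph V} {u v : V} {e : G.edgeSet} {x y : V ⊕ G.edgeSet}

@[simp] lemma subdiv_adj_inl_inr : (subdiv G).Adj (inl v) (inr e) ↔ v ∈ (e : Sym2 V) := by
  simp [subdiv]

@[simp] lemma subdiv_adj_inr_inl : (subdiv G).Adj (inr e) (inl v) ↔ v ∈ (e : Sym2 V) := by
  simp [subdiv]

@[simp] lemma not_subdiv_adj_inl_inl : ¬ (subdiv G).Adj (inl u) (inl v) := by
  simp [subdiv]

@[simp] lemma not_subdiv_adj_inr_inr {f : G.edgeSet} : ¬ (subdiv G).Adj (inr e) (inr f) := by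
  simp [subdiv]

lemma isLeft_eq_not_of_subdiv_adj (h : (subdiv G).Adj x y) : y.isLeft = !x.isLeft := by
  cases x <;> cases y <;> simp_all

lemma isLeft_eq_of_subdiv_commonNeighborGraph_adj (h : (subdiv G).commonNeighborGraph.Adj x y) :
    x.isLeft = y.isLeft := by
  obtain ⟨-, z, hx, hy⟩ := h
  rw [← Bool.not_inj_iff, ← isLeft_eq_not_of_subdiv_adj hx, ← isLeft_eq_not_of_subdiv_adj hy]

lemma ncard_neighborSet_subdiv_inr : ((subdiv G).neighborSet (inr e)).ncard = 2 := by
  obtain ⟨e, he⟩ := e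
  induction e using Sym2.ind with
  | h a b =>
    have : (subdiv G).neighborSet (inr ⟨s(a, b), he⟩) = {inl a, inl b} := by
      ext (w | f) <;> simp
    rw [this, Set.ncard_pair (by simpa using G.ne_of_adj he)]

lemma ncard_neighborSet_subdiv_of_isLeft_eq_false (hx : x.isLeft = false) :
    ((subdiv G).neighborSet x).ncard = 2 := by
  obtain ⟨e, rfl⟩ := isRight_iff.mp (isLeft_eq_false.mp hx)
  exact ncard_neighborSet_subdiv_inr

lemma subdiv_commonNeighborGraph_adj_inl :
    (subdiv G).commonNeighborGraph.Adj (inl u) (inl v) ↔ G.Adj u v := by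
  simp only [commonNeighborGraph_adj]
  refine ⟨?_, fun h => ⟨by simpa using h.ne, inr ⟨s(u, v), h⟩, by simp, by simp⟩⟩
  rintro ⟨huv, (w | ⟨e, he⟩), hu, hv⟩
  · simp at hu
  · simp only [subdiv_adj_inl_inr] at hu hv
    rwa [(Sym2.mem_and_mem_iff (by simpa using huv)).mp ⟨hu, hv⟩] at he

def SimpleGraph.Iso.subdiv {V' : Type*} {G' : SimpleGraph V'} (φ : G ≃g G') :
    subdiv G ≃g subdiv G' where
  toEquiv := Equiv.sumCongr φ.toEquiv φ.mapEdgeSet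
  map_rel_iff' := by
    rintro (v | x) (w | y) <;>
      simp [Iso.mapEdgeSet, Hom.mapEdgeSet, Sym2.mem_map, φ.injective.eq_iff]

end Subdivision

section Flip

variable {V₁ V₂ : Type*} {G₁ : SimpleGraph V₁} {G₂ : SimpleGraph V₂} (φ : subdiv G₁ ≃g subdiv G₂)
  {x y : V₁ ⊕ G₁.edgeSet}

def flippedVerts : Set (V₁ ⊕ G₁.edgeSet) := {x | x.isLeft = true ∧ (φ x).isLeft = false}

def flippedEdges : Set (V₁ ⊕ G₁.edgeSet) := {x | x.isLeft = false ∧ (φ x).isLeft = true}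

variable {φ}

lemma mem_flippedEdges_of_adj (hx : x ∈ flippedVerts φ) (h : (subdiv G₁).Adj x y) :
    y ∈ flippedEdges φ :=
  ⟨by rw [isLeft_eq_not_of_subdiv_adj h, hx.1]; rfl,
    by rw [isLeft_eq_not_of_subdiv_adj (φ.map_adj_iff.mpr h), hx.2]; rfl⟩

lemma mem_flippedVerts_of_adj (hx : x ∈ flippedEdges φ) (h : (subdiv G₁).Adj x y) :
    y ∈ flippedVerts φ :=
  ⟨by rw [isLeft_eq_not_of_subdiv_adj h, hx.1]; rfl,
    by rw [isLeft_eq_not_of_subdiv_adj (φ.map_adj_iff.mpr h), hx.2]; rfl⟩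

lemma ncard_neighborSet_of_mem_flipped (hx : x ∈ flippedVerts φ ∪ flippedEdges φ) :
    ((subdiv G₁).neighborSet x).ncard = 2 := by
  rcases hx with ⟨-, hφx⟩ | ⟨hx, -⟩
  · rw [← φ.ncard_neighborSet, ncard_neighborSet_subdiv_of_isLeft_eq_false hφx]
  · exact ncard_neighborSet_subdiv_of_isLeft_eq_false hx

variable (φ) in
lemma exists_bijective_flippedVerts_flippedEdges : ∃ f : flippedVerts φ → flippedEdges φ,
    Bijective f ∧ ∀ a : flippedVerts φ, (subdiv G₁).Adj a (f a) :=
  exists_bijective_adj_of_ncard_neighborSet_eq two_pos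
    (fun _ hx _ hy => mem_flippedEdges_of_adj hx hy)
    (fun _ hx _ hy => mem_flippedVerts_of_adj hx hy) fun _ hx => ncard_neighborSet_of_mem_flipped hx

end Flip

section Lift

variable {V₁ V₂ : Type*} {G₁ : SimpleGraph V₁} {G₂ : SimpleGraph V₂} {φ : subdiv G₁ ≃g subdiv G₂}
  (f : flippedVerts φ → flippedEdges φ) {u v : V₁}

open Classical in
noncomputable def liftVertex (v : V₁) : V₁ ⊕ G₁.edgeSet :=
  if hv : inl v ∈ flippedVerts φ then f ⟨inl v, hv⟩ else inl v

lemma liftVertex_of_mem (hv : inl v ∈ flippedVerts φ) : liftVertex f v = f ⟨inl v, hv⟩ :=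
  dif_pos hv

lemma liftVertex_of_notMem (hv : inl v ∉ flippedVerts φ) : liftVertex f v = inl v :=
  dif_neg hv

variable {f}

lemma liftVertex_injective (hf : Injective f) : Injective (liftVertex f) := by
  intro u v huv
  by_cases hu : inl u ∈ flippedVerts φ <;> by_cases hv : inl v ∈ flippedVerts φ <;>
    simp only [liftVertex_of_mem f, liftVertex_of_notMem f, hu, hv, not_false_eq_true] at huv
  · exact inl_injective (congrArg Subtype.val (hf (Subtype.ext huv)))
  · simpa [huv] using (f ⟨inl u, hu⟩).2.1
  · simpa [← huv] using (f ⟨inl v, hv⟩).2.1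
  · exact inl_injective huv

lemma range_liftVertex (hf : Surjective f) : Set.range (liftVertex f) = φ ⁻¹' Set.range inl := by
  ext x
  rw [Set.mem_preimage, Set.range_inl, Set.mem_ofPred_eq]
  constructor
  · rintro ⟨v, rfl⟩
    by_cases hv : inl v ∈ flippedVerts φ
    · exact liftVertex_of_mem f hv ▸ (f ⟨inl v, hv⟩).2.2
    · simpa [liftVertex_of_notMem f hv, flippedVerts] using hv
  · intro hx
    cases x with
    | inl v => exact ⟨v, liftVertex_of_notMem f fun hv => Bool.false_ne_true (hv.2.symm.trans hx)⟩
    | inr e =>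
      obtain ⟨⟨a, ha⟩, hfa⟩ := hf ⟨inr e, rfl, hx⟩
      obtain ⟨v, rfl⟩ := isLeft_iff.mp ha.1
      exact ⟨v, by rw [liftVertex_of_mem f ha, hfa]⟩

lemma commonNeighborGraph_adj_of_mem_flippedVerts_iff (hf : Bijective f)
    (hadj : ∀ a : flippedVerts φ, (subdiv G₁).Adj a (f a)) (hu : inl u ∈ flippedVerts φ)
    (hv : inl v ∈ flippedVerts φ) :
    (subdiv G₁).commonNeighborGraph.Adj (f ⟨inl u, hu⟩) (f ⟨inl v, hv⟩) ↔ G₁.Adj u v := by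
  have f_eq {a b} {ha hb} (h : (f ⟨a, ha⟩ : V₁ ⊕ G₁.edgeSet) = f ⟨b, hb⟩) : a = b :=
    congrArg Subtype.val (hf.1 (Subtype.ext h))
  constructor
  · rintro ⟨hne, z, hzu, hzv⟩
    have hz : z ∈ flippedVerts φ := mem_flippedVerts_of_adj (f _).2 hzu
    rw [← subdiv_commonNeighborGraph_adj_inl]
    refine ⟨fun h => hne (by cases h; rfl), ?_⟩
    -- `z` has only two neighbours, so its partner `f z` is one of `f u`, `f v`
    rcases Set.eq_or_eq_of_ncard_eq_two (ncard_neighborSet_of_mem_flipped (.inl hz)) hzu.symm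
      hzv.symm (hadj ⟨z, hz⟩) hne with h | h
    · obtain rfl := f_eq h
      exact ⟨_, hzv.symm, hadj ⟨inl v, hv⟩⟩
    · obtain rfl := f_eq h
      exact ⟨_, hadj ⟨inl u, hu⟩, hzu.symm⟩
  · intro huv
    have hne : (f ⟨inl u, hu⟩ : V₁ ⊕ G₁.edgeSet) ≠ f ⟨inl v, hv⟩ :=
      fun h => huv.ne (inl_injective (f_eq h))
    -- the subdivision vertex of `uv` is the partner of `u` or of `v`
    obtain ⟨⟨a, ha⟩, hfa⟩ := hf.2 ⟨inr ⟨s(u, v), huv⟩, mem_flippedEdges_of_adj hu (by simp)⟩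
    have hae := hadj ⟨a, ha⟩
    rw [hfa] at hae
    obtain ⟨w, rfl⟩ := isLeft_iff.mp ha.1
    rcases (by simpa using hae : w = u ∨ w = v) with rfl | rfl
    · exact ⟨hne, inl v, by rw [hfa]; simp, (hadj _).symm⟩
    · exact ⟨hne, inl u, (hadj _).symm, by rw [hfa]; simp⟩

lemma not_adj_of_mem_flippedVerts_of_notMem (hu : inl u ∈ flippedVerts φ)
    (hv : inl v ∉ flippedVerts φ) :
    ¬ G₁.Adj u v ∧ ¬ (subdiv G₁).commonNeighborGraph.Adj (liftVertex f u) (liftVertex f v) := by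
  refine ⟨fun huv => hv (mem_flippedVerts_of_adj
    (mem_flippedEdges_of_adj (y := inr ⟨s(u, v), huv⟩) hu (by simp)) (by simp)), fun h => ?_⟩
  have := isLeft_eq_of_subdiv_commonNeighborGraph_adj h
  rw [liftVertex_of_mem f hu, liftVertex_of_notMem f hv, (f _).2.1] at this
  exact Bool.false_ne_true this

lemma commonNeighborGraph_adj_liftVertex_iff (hf : Bijective f)
    (hadj : ∀ a : flippedVerts φ, (subdiv G₁).Adj a (f a)) :
    (subdiv G₁).commonNeighborGraph.Adj (liftVertex f u) (liftVertex f v) ↔ G₁.Adj u v := by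
  by_cases hu : inl u ∈ flippedVerts φ <;> by_cases hv : inl v ∈ flippedVerts φ
  · rw [liftVertex_of_mem f hu, liftVertex_of_mem f hv]
    exact commonNeighborGraph_adj_of_mem_flippedVerts_iff hf hadj hu hv
  · have h := not_adj_of_mem_flippedVerts_of_notMem (f := f) hu hv
    exact iff_of_false h.2 h.1
  · have h := not_adj_of_mem_flippedVerts_of_notMem (f := f) hv hu
    exact iff_of_false (fun h' => h.2 h'.symm) (fun h' => h.1 h'.symm)
  · rw [liftVertex_of_notMem f hu, liftVertex_of_notMem f hv]
    exact subdiv_commonNeighborGraph_adj_inl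

end Lift

theorem exists_embedding_commonNeighborGraph_range_eq_preimage {V₁ V₂ : Type*}
    {G₁ : SimpleGraph V₁} {G₂ : SimpleGraph V₂} (φ : subdiv G₁ ≃g subdiv G₂) :
    ∃ ι : G₁ ↪g (subdiv G₁).commonNeighborGraph, Set.range ι = φ ⁻¹' Set.range inl := by
  obtain ⟨f, hf, hadj⟩ := exists_bijective_flippedVerts_flippedEdges φ
  exact ⟨⟨⟨liftVertex f, liftVertex_injective hf.1⟩,
    commonNeighborGraph_adj_liftVertex_iff hf hadj⟩, range_liftVertex hf.2⟩

/-- Two graphs are isomorphic if and only if their subdivisions are isomorphic. -/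
theorem iso_iff_subdivision_iso {V₁ V₂ : Type*} (G₁ : SimpleGraph V₁) (G₂ : SimpleGraph V₂) :
    Nonempty (G₁ ≃g G₂) ↔ Nonempty (subdiv G₁ ≃g subdiv G₂) := by
  refine ⟨fun ⟨ψ⟩ => ⟨ψ.subdiv⟩, fun ⟨φ⟩ => ?_⟩
  obtain ⟨ι₁, hι₁⟩ := exists_embedding_commonNeighborGraph_range_eq_preimage φ
  let ι₂ : G₂ ↪g (subdiv G₂).commonNeighborGraph := ⟨.inl, subdiv_commonNeighborGraph_adj_inl⟩
  have hφ : Set.BijOn φ (Set.range ι₁) (Set.range ι₂) := hι₁ ▸ φ.bijective.bijOn_preimage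
  exact ⟨ι₁.isoInduceRange.trans ((φ.commonNeighborGraph.induce hφ).trans ι₂.isoInduceRange.symm)⟩
end

section
/- Let G be a connected graph, let u and v be twin vertices of G (i.e., N(u) = N(v) or N[u] = N[v]), and let X ⊆ V(G) with |X| ≥ 3 such that u ∈ X implies v ∈ X. Then the minimum size of a set S ⊆ V(G) \ X with G[S ∪ X] connected equals the minimum size of a set S ⊆ V(G−u) \ (X \ {u}) with (G−u)[S ∪ (X \ {u})] connected. -/
/-!
Twins can stand in for each other: a walk through `u` can be rerouted through its twin `v`, so
removing `u` from a connected vertex set containing `v` leaves it connected, and `u` can be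
re-attached to a connected set containing `v` and some other vertex, because `u` is adjacent to
every neighbour of `v` other than itself. Hence a Steiner set for `X` in `G` gives one for
`X \ {u}` in `G - u` of no larger size (exchanging `u` for `v` when `u` is a Steiner vertex and `v`
is unused), and a Steiner set in `G - u` is one for `X` in `G`. The bound `3 ≤ |X|` supplies the
vertex of `X` other than `u` and `v` that makes the re-attachment possible.
-/

open SimpleGraph

/-- `SteinerNum G X`: the minimum size of a set `S ⊆ V(G) \ X` of Steiner vertices such that
`G[S ∪ X]` is connected. -/
noncomputable def SteinerNum {V : Type*} (G : SimpleGraph V) (X : Set V) : ℕ :=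
  sInf {n | ∃ S : Set V, S ⊆ Xᶜ ∧ S.ncard = n ∧ (G.induce (S ∪ X)).Connected}

lemma Set.exists_mem_ne_ne_of_three_le_ncard {α : Type*} {X : Set α} (hX : 3 ≤ X.ncard)
    (a b : α) : ∃ t ∈ X, t ≠ a ∧ t ≠ b := by
  have hab : ({a, b} : Set α).ncard ≤ 2 := (Set.ncard_insert_le a {b}).trans (by simp)
  have hX' : 0 < (X \ {a, b}).ncard :=
    calc 0 < X.ncard - ({a, b} : Set α).ncard := by omega
      _ ≤ (X \ {a, b}).ncard := Set.le_ncard_sdiff _ _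
  obtain ⟨t, htX, htab⟩ := Set.nonempty_of_ncard_ne_zero hX'.ne'
  simp only [Set.mem_insert_iff, Set.mem_singleton_iff, not_or] at htab
  exact ⟨t, htX, htab⟩

namespace SimpleGraph

variable {V W : Type*} {G : SimpleGraph V}

lemma Preconnected.of_surjective_of_reachable {H : SimpleGraph W} (hG : G.Preconnected)
    (f : V → W) (hf : Function.Surjective f)
    (hadj : ∀ ⦃a b⦄, G.Adj a b → H.Reachable (f a) (f b)) : H.Preconnected := by
  intro x y
  obtain ⟨a, rfl⟩ := hf x
  obtain ⟨b, rfl⟩ := hf y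
  obtain ⟨p⟩ := hG a b
  induction p with
  | nil => rfl
  | cons h _ ih => exact (hadj h).trans ih

lemma exists_adj_of_induce_preconnected {T : Set V} (hT : (G.induce T).Preconnected)
    {a t : V} (ha : a ∈ T) (ht : t ∈ T) (hta : t ≠ a) : ∃ w ∈ T, G.Adj a w := by
  have : Nontrivial T := Set.nontrivial_coe_sort.mpr ⟨t, ht, a, ha, hta⟩
  obtain ⟨w, hw⟩ := hT.exists_adj_of_nontrivial ⟨a, ha⟩
  exact ⟨w, w.2, hw⟩

lemma induce_insert_connected_of_adj {T : Set V} (hT : (G.induce T).Preconnected) {u w : V}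
    (hw : w ∈ T) (huw : G.Adj u w) : (G.induce (insert u T)).Connected := by
  rw [Set.insert_eq]
  exact connected_induce_union .of_subsingleton hT (Set.mem_singleton u) hw huw

noncomputable def induceInduceIso (W : Set V) (B : Set W) :
    (G.induce W).induce B ≃g G.induce (Subtype.val '' B) where
  toEquiv := Equiv.Set.image Subtype.val B Subtype.val_injective
  map_rel_iff' := Iff.rfl

theorem steinerNum_induce (W X : Set V) :
    SteinerNum (G.induce W) (Subtype.val ⁻¹' X) =
      sInf {n | ∃ S : Set V, S ⊆ W \ X ∧ S.ncard = n ∧ (G.induce (W ∩ (S ∪ X))).Connected} := by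
  unfold SteinerNum
  congr 1
  ext n
  constructor
  · rintro ⟨S, hSX, rfl, hS⟩
    refine ⟨Subtype.val '' S, ?_, Set.ncard_image_of_injective _ Subtype.val_injective, ?_⟩
    · rintro _ ⟨x, hx, rfl⟩
      exact ⟨x.2, hSX hx⟩
    · rwa [(induceInduceIso W _).connected_iff, ← Set.preimage_image_eq S Subtype.val_injective,
        ← Set.preimage_union, Subtype.image_preimage_coe] at hS
  · rintro ⟨S, hSX, rfl, hS⟩
    have hSW : S ⊆ W := fun x hx => (hSX hx).1
    refine ⟨Subtype.val ⁻¹' S, fun x hx => (hSX hx).2,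
      Set.ncard_preimage_of_injective_subset_range Subtype.val_injective (by simpa using hSW), ?_⟩
    rwa [(induceInduceIso W _).connected_iff, ← Set.preimage_union, Subtype.image_preimage_coe]

def AreTwins (G : SimpleGraph V) (u v : V) : Prop :=
  G.neighborSet u = G.neighborSet v ∨ insert u (G.neighborSet u) = insert v (G.neighborSet v)

namespace AreTwins

variable {u v : V}

lemma symm (h : G.AreTwins u v) : G.AreTwins v u :=
  h.imp Eq.symm Eq.symm

lemma eq_or_adj (h : G.AreTwins u v) {w : V} (huw : G.Adj u w) : w = v ∨ G.Adj v w := by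
  rcases h with h | h
  · exact Or.inr (h ▸ huw : w ∈ G.neighborSet v)
  · exact (h ▸ Set.mem_insert_of_mem u huw : w ∈ insert v (G.neighborSet v))

lemma induce_diff_singleton_connected (h : G.AreTwins u v) (huv : u ≠ v) {T : Set V}
    (hT : (G.induce T).Connected) (hvT : u ∈ T → v ∈ T) : (G.induce (T \ {u})).Connected := by
  classical
  by_cases huT : u ∈ T
  swap
  · rwa [Set.sdiff_singleton_eq_self huT]
  have hv : v ∈ T \ {u} := ⟨hvT huT, huv.symm⟩
  -- Merging `u` into `v` turns each edge of `G[T]` into an edge or a loop of `G[T \ {u}]`.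
  let f : T → ↥(T \ {u}) := fun x => if hx : x.1 = u then ⟨v, hv⟩ else ⟨x, x.2, hx⟩
  have hreach : ∀ ⦃a b : T⦄, G.Adj a b → b.1 ≠ u →
      (G.induce (T \ {u})).Reachable (f a) (f b) := by
    rintro ⟨a, ha⟩ ⟨b, hb⟩ hab (hbu : b ≠ u)
    rw [show f ⟨b, hb⟩ = ⟨b, hb, hbu⟩ from dif_neg hbu]
    by_cases hau : a = u
    · subst hau
      rw [show f ⟨a, ha⟩ = ⟨v, hv⟩ from dif_pos rfl]
      rcases h.eq_or_adj hab with rfl | hvb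
      · rfl
      · exact Adj.reachable hvb
    · rw [show f ⟨a, ha⟩ = ⟨a, ha, hau⟩ from dif_neg hau]
      exact Adj.reachable hab
  refine (connected_iff _).mpr ⟨hT.preconnected.of_surjective_of_reachable f ?_ ?_, ⟨⟨v, hv⟩⟩⟩
  · rintro ⟨x, hxT, hxu : x ≠ u⟩
    exact ⟨⟨x, hxT⟩, dif_neg hxu⟩
  · intro a b hab
    by_cases hbu : b.1 = u
    · exact (hreach hab.symm fun hau => hab.ne (Subtype.ext (hau.trans hbu.symm))).symm
    · exact hreach hab hbu

lemma induce_insert_connected (h : G.AreTwins u v) {T : Set V}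
    (hT : (G.induce T).Preconnected) (huT : u ∉ T) (hvT : v ∈ T) {t : V} (ht : t ∈ T)
    (htv : t ≠ v) : (G.induce (insert u T)).Connected := by
  obtain ⟨w, hwT, hvw⟩ := exists_adj_of_induce_preconnected hT hvT ht htv
  have huw : G.Adj u w := (h.symm.eq_or_adj hvw).resolve_left (ne_of_mem_of_not_mem hwT huT)
  exact induce_insert_connected_of_adj hT hwT huw

lemma induce_connected_of_diff_singleton (h : G.AreTwins u v) (huv : u ≠ v) {T : Set V}
    (hT : (G.induce (T \ {u})).Connected) (hvT : u ∈ T → v ∈ T) {t : V} (ht : t ∈ T)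
    (htu : t ≠ u) (htv : t ≠ v) : (G.induce T).Connected := by
  by_cases huT : u ∈ T
  · have := h.induce_insert_connected hT.preconnected (fun hu => hu.2 rfl) ⟨hvT huT, huv.symm⟩
      ⟨ht, htu⟩ htv
    rwa [Set.insert_sdiff_singleton, Set.insert_eq_of_mem huT] at this
  · rwa [Set.sdiff_singleton_eq_self huT] at hT

lemma exists_steiner_set_diff_singleton (h : G.AreTwins u v) (huv : u ≠ v) {X S : Set V}
    (hux : u ∈ X → v ∈ X) {t : V} (ht : t ∈ X) (htu : t ≠ u) (hSX : S ⊆ Xᶜ)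
    (hS : (G.induce (S ∪ X)).Connected) :
    ∃ S' ⊆ Xᶜ, u ∉ S' ∧ S'.ncard ≤ S.ncard ∧ (G.induce ((S' ∪ X) \ {u})).Connected := by
  by_cases hv : u ∈ S ∪ X → v ∈ S ∪ X
  · refine ⟨S \ {u}, fun x hx => hSX hx.1, fun hu => hu.2 rfl,
      Set.ncard_sdiff_singleton_le S u, ?_⟩
    have hset : (S \ {u} ∪ X) \ {u} = (S ∪ X) \ {u} := by
      ext x
      simp only [Set.mem_sdiff, Set.mem_union, Set.mem_singleton_iff]
      tauto
    rw [hset]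
    exact h.induce_diff_singleton_connected huv hS hv
  obtain ⟨huSX, hvSX⟩ := Classical.not_imp.mp hv
  have hvX : v ∉ X := fun hvX => hvSX (Or.inr hvX)
  have huS : u ∈ S := huSX.resolve_right fun huX => hvX (hux huX)
  have hvS : v ∉ S := fun hvS => hvSX (Or.inl hvS)
  refine ⟨insert v (S \ {u}), Set.insert_subset hvX fun x hx => hSX hx.1, ?_,
    (Set.ncard_exchange hvS huS).le, ?_⟩
  · rintro (hu | hu)
    exacts [huv hu, hu.2 rfl]
  · have hins := h.symm.induce_insert_connected hS.preconnected hvSX huSX (Or.inr ht) htu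
    have hset : (insert v (S \ {u}) ∪ X) \ {u} = insert v (S ∪ X) \ {u} := by
      ext x
      simp only [Set.mem_sdiff, Set.mem_union, Set.mem_insert_iff, Set.mem_singleton_iff]
      tauto
    rw [hset]
    exact h.induce_diff_singleton_connected huv hins fun _ => Set.mem_insert v _

end AreTwins

end SimpleGraph

theorem ST_delete_twin_general {V : Type*} (G : SimpleGraph V)
    (u v : V) (huv : u ≠ v)
    (htwin : G.neighborSet u = G.neighborSet v ∨
      insert u (G.neighborSet u) = insert v (G.neighborSet v))
    (X : Set V) (hX : 3 ≤ X.ncard) (hux : u ∈ X → v ∈ X) :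
    SteinerNum G X = SteinerNum (G.induce {x : V | x ≠ u}) {x : {x : V // x ≠ u} | (x : V) ∈ X} := by
  have htw : G.AreTwins u v := htwin
  obtain ⟨t, htX, htu, htv⟩ := Set.exists_mem_ne_ne_of_three_le_ncard hX u v
  have hdiff (T : Set V) : {x | x ≠ u} ∩ T = T \ {u} := Set.ext fun _ => and_comm
  refine Eq.trans ?_ (steinerNum_induce {x | x ≠ u} X).symm
  apply csInf_eq_csInf_of_forall_exists_le
  · rintro _ ⟨S, hSX, rfl, hS⟩
    obtain ⟨S', hS'X, huS', hcard, hS'⟩ :=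
      htw.exists_steiner_set_diff_singleton huv hux htX htu hSX hS
    exact ⟨S'.ncard, ⟨S', fun x hx => ⟨ne_of_mem_of_not_mem hx huS', hS'X hx⟩, rfl,
      by rwa [hdiff]⟩, hcard⟩
  · rintro _ ⟨S, hSX, rfl, hS⟩
    have huS : u ∉ S := fun hu => (hSX hu).1 rfl
    rw [hdiff] at hS
    exact ⟨S.ncard, ⟨S, fun x hx => (hSX hx).2, rfl, htw.induce_connected_of_diff_singleton huv hS
      (fun hu => .inr (hux (hu.resolve_left huS))) (.inr htX) htu htv⟩, le_rfl⟩

/-- If `u` and `v` are twin vertices of a connected graph `G`, `|X| ≥ 3`, and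
`u ∈ X` implies `v ∈ X`, then `ST(G, X) = SteinerNum(G − u, X \ {u})`. -/
theorem ST_delete_twin {V : Type*} (G : SimpleGraph V) (hG : G.Connected)
    (u v : V) (huv : u ≠ v)
    (htwin : G.neighborSet u = G.neighborSet v ∨
      insert u (G.neighborSet u) = insert v (G.neighborSet v))
    (X : Set V) (hX : 3 ≤ X.ncard) (hux : u ∈ X → v ∈ X) :
    SteinerNum G X = SteinerNum (G.induce {x : V | x ≠ u}) {x : {x : V // x ≠ u} | (x : V) ∈ X} :=
  ST_delete_twin_general G u v huv htwin X hX hux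
end

section
/- Let G be a connected graph, X ⊆ V(G), and let S ⊆ V(G) \ X be a minimum-size set such that G[S ∪ X] is connected. If w ∈ S is a simplicial vertex of G, then |X| ≤ 1 or S is not minimum; equivalently, when |X| ≥ 2 and X is not already connected, no minimum Steiner set S contains a simplicial vertex not in X. -/
open SimpleGraph

namespace SimpleGraph

variable {V : Type*} {G : SimpleGraph V}

/- Retract `w` onto one of its neighbours `c` in `s`: since the neighbourhood of `w` is a clique,
every edge of `G[s]` is sent to an edge or a single vertex of `G[s \ {w}]`. -/
theorem Preconnected.induce_diff_singleton_of_isClique {s : Set V} {w : V}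
    (hs : (G.induce s).Preconnected) (hw : G.IsClique (G.neighborSet w)) :
    (G.induce (s \ {w})).Preconnected := by
  classical
  rintro u v
  obtain ⟨c, hc⟩ : ∃ c : ↥(s \ {w}), ∀ y : s, G.Adj w y → (y : V) = c ∨ G.Adj c y := by
    by_cases hn : ∃ c ∈ s \ {w}, G.Adj w c
    · obtain ⟨c, hcs, hwc⟩ := hn
      exact ⟨⟨c, hcs⟩, fun y hwy => or_iff_not_imp_left.2 fun hyc => hw hwc hwy (Ne.symm hyc)⟩
    · exact ⟨u, fun y hwy => (hn ⟨y, ⟨y.2, (G.ne_of_adj hwy).symm⟩, hwy⟩).elim⟩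
  let f : s → ↥(s \ {w}) := fun x =>
    if hx : (x : V) = w then c else ⟨x, Set.mem_sdiff_singleton.2 ⟨x.2, hx⟩⟩
  have hf_retract : ∀ x : ↥(s \ {w}), f ⟨x, x.2.1⟩ = x := fun x => dif_neg (x.2.2 : (x : V) ≠ w)
  have hf_adj : ∀ x y : s, G.Adj x y →
      Relation.ReflTransGen (G.induce (s \ {w})).Adj (f x) (f y) := by
    intro x y hxy
    by_cases hx : (x : V) = w <;> by_cases hy : (y : V) = w <;>
      simp only [f, hx, hy, dite_true, dite_false]
    · exact absurd (hx.trans hy.symm) (G.ne_of_adj hxy)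
    · rcases hc y (hx ▸ hxy) with hyc | hcy
      · rw [show c = ⟨y, hyc ▸ c.2⟩ from Subtype.ext hyc.symm]
      · exact .single hcy
    · rcases hc x (hy ▸ hxy.symm) with hxc | hcx
      · rw [show c = ⟨x, hxc ▸ c.2⟩ from Subtype.ext hxc.symm]
      · exact .single hcx.symm
    · exact .single hxy
  rw [reachable_iff_reflTransGen, ← hf_retract u, ← hf_retract v]
  exact Relation.ReflTransGen.lift' f hf_adj _ _
    ((reachable_iff_reflTransGen _ _).1 (hs ⟨u, u.2.1⟩ ⟨v, v.2.1⟩))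

end SimpleGraph

theorem steiner_remove_simplicial_general {V : Type*} (G : SimpleGraph V)
    (X S : Set V) (hX : 2 ≤ X.ncard) (hS : S ⊆ Xᶜ)
    (hconn : (G.induce (S ∪ X)).Connected)
    (w : V) (hw : w ∈ S) (hsimp : G.IsClique (G.neighborSet w)) :
    (G.induce ((S \ {w}) ∪ X)).Connected := by
  have hwX : w ∉ X := hS hw
  obtain ⟨x, hx⟩ := Set.nonempty_of_ncard_ne_zero (by omega : X.ncard ≠ 0)
  have hT : S \ {w} ∪ X = (S ∪ X) \ {w} := by
    rw [Set.union_sdiff_distrib, Set.sdiff_singleton_eq_self hwX]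
  have : Nonempty ↥(S \ {w} ∪ X) := ⟨⟨x, Or.inr hx⟩⟩
  refine Connected.mk ?_
  rw [hT]
  exact hconn.preconnected.induce_diff_singleton_of_isClique hsimp

/-- If `|X| ≥ 2`, `S` is a Steiner set for `X` (i.e. `S ⊆ V(G) \ X` and `G[S ∪ X]` is
connected) and `w ∈ S` is a simplicial vertex, then `S \ {w}` is also a Steiner set
for `X`; hence no minimum Steiner set contains a simplicial vertex outside `X`. -/
theorem steiner_remove_simplicial {V : Type*} (G : SimpleGraph V) (hG : G.Connected)
    (X S : Set V) (hX : 2 ≤ X.ncard) (hS : S ⊆ Xᶜ)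
    (hconn : (G.induce (S ∪ X)).Connected)
    (w : V) (hw : w ∈ S) (hsimp : G.IsClique (G.neighborSet w)) :
    (G.induce ((S \ {w}) ∪ X)).Connected :=
  steiner_remove_simplicial_general G X S hX hS hconn w hw hsimp
end

section
/- Let G be a graph with tree model (T, {T_u}) such that the model is minimal (no two adjacent nodes t, t' of T satisfy V_t ⊆ V_{t'}, where V_t = {u : t ∈ T_u}). Then for every leaf ℓ of T there exists a vertex u of G with T_u = {ℓ}; moreover, if G has no twin vertices, this u is unique. -/
open SimpleGraph

/-! The minimality condition at the edge `ℓa` of the leaf `ℓ` yields a vertex `u` with `ℓ ∈ T_u`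
and `a ∉ T_u`; since `T_u` is connected and `a` is the only neighbour of `ℓ`, this forces
`T_u = {ℓ}`. Two vertices whose subtrees both equal `{ℓ}` are adjacent and meet exactly the
same subtrees, so they are (true) twins. -/

namespace SimpleGraph

variable {V N : Type*}

theorem eq_singleton_of_induce_connected {T : SimpleGraph N} {S : Set N}
    (hS : (T.induce S).Connected) {ℓ : N} (hℓ : ℓ ∈ S) (hnbr : ∀ b ∈ S, ¬T.Adj ℓ b) :
    S = {ℓ} := by
  refine Set.eq_singleton_iff_unique_mem.mpr ⟨hℓ, fun b hb => ?_⟩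
  by_contra hbℓ
  obtain ⟨⟨c, hc⟩, hℓc⟩ := (hS.preconnected ⟨ℓ, hℓ⟩ ⟨b, hb⟩).nonempty_neighborSet_left
    (fun h => hbℓ (congrArg Subtype.val h).symm)
  exact hnbr c hc hℓc

theorem mem_insert_neighborSet_iff_inter_nonempty {G : SimpleGraph V} {t : V → Set N}
    (hmodel : ∀ w w' : V, w ≠ w' → (G.Adj w w' ↔ (t w ∩ t w').Nonempty))
    {w : V} (hw : (t w).Nonempty) (x : V) :
    x ∈ insert w (G.neighborSet w) ↔ (t w ∩ t x).Nonempty := by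
  rcases eq_or_ne x w with rfl | hxw
  · simpa using hw
  · simp [hxw, hmodel w x hxw.symm]

theorem insert_neighborSet_eq_of_eq {G : SimpleGraph V} {t : V → Set N}
    (hmodel : ∀ w w' : V, w ≠ w' → (G.Adj w w' ↔ (t w ∩ t w').Nonempty))
    {u v : V} (hu : (t u).Nonempty) (huv : t u = t v) :
    insert u (G.neighborSet u) = insert v (G.neighborSet v) := by
  ext x
  rw [mem_insert_neighborSet_iff_inter_nonempty hmodel hu,
    mem_insert_neighborSet_iff_inter_nonempty hmodel (huv ▸ hu), huv]

end SimpleGraph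

theorem leaf_has_leafy_vertex_general {V N : Type*}
    (G : SimpleGraph V) (T : SimpleGraph N)
    (t : V → Set N)
    (htconn : ∀ w, (T.induce (t w)).Connected)
    (hmodel : ∀ w w' : V, w ≠ w' → (G.Adj w w' ↔ (t w ∩ t w').Nonempty))
    (hmin : ∀ a b : N, T.Adj a b → ¬ ({u : V | a ∈ t u} ⊆ {u : V | b ∈ t u}))
    (ℓ : N) (hleaf : ∃! a : N, T.Adj ℓ a) :
    (∃ u : V, t u = {ℓ}) ∧
    ((∀ u v : V, u ≠ v → ¬(G.neighborSet u = G.neighborSet v ∨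
        insert u (G.neighborSet u) = insert v (G.neighborSet v))) →
      ∃! u : V, t u = {ℓ}) := by
  obtain ⟨a, hℓa, ha_unique⟩ := hleaf
  obtain ⟨u, hℓu, hau⟩ := Set.not_subset.mp (hmin ℓ a hℓa)
  have htu : t u = {ℓ} := eq_singleton_of_induce_connected (htconn u) hℓu
    fun b hb hℓb => hau (ha_unique b hℓb ▸ hb)
  refine ⟨⟨u, htu⟩, fun hnotwin => ⟨u, htu, fun v htv => ?_⟩⟩
  by_contra hvu
  exact hnotwin v u hvu <| Or.inr <|
    insert_neighborSet_eq_of_eq hmodel (htv ▸ Set.singleton_nonempty ℓ) (htv.trans htu.symm)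

/-- In a minimal tree model `(T, {t u})` of `G` (no node's bag is contained in an
adjacent node's bag), every leaf `ℓ` of `T` carries a vertex `u` with `t u = {ℓ}`;
moreover, if `G` has no twin vertices, this vertex is unique. -/
theorem leaf_has_leafy_vertex {V N : Type*}
    (G : SimpleGraph V) (T : SimpleGraph N)
    (hTconn : T.Connected) (hTacyclic : T.IsAcyclic)
    (t : V → Set N)
    (htne : ∀ w, (t w).Nonempty)
    (htconn : ∀ w, (T.induce (t w)).Connected)
    (hmodel : ∀ w w' : V, w ≠ w' → (G.Adj w w' ↔ (t w ∩ t w').Nonempty))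
    (hmin : ∀ a b : N, T.Adj a b → ¬ ({u : V | a ∈ t u} ⊆ {u : V | b ∈ t u}))
    (ℓ : N) (hleaf : ∃! a : N, T.Adj ℓ a) :
    (∃ u : V, t u = {ℓ}) ∧
    ((∀ u v : V, u ≠ v → ¬(G.neighborSet u = G.neighborSet v ∨
        insert u (G.neighborSet u) = insert v (G.neighborSet v))) →
      ∃! u : V, t u = {ℓ}) :=
  leaf_has_leafy_vertex_general G T t htconn hmodel hmin ℓ hleaf
end
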